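/- arXiv:1512.06359 — 3 statements merged into one kernel-verified Lean document; each statement's English description precedes it below -/
import Mathlib

section
/- Fix x,y ∈ E. The following two conditions are equivalent: (i) lim_{ε↓0} liminf_{n→∞} sup_{ξ ∈ C(𝓟_x,𝓟_y)} ξ( d(X_n,Y_n) ≤ ε ) > 0; (ii) for some p > 1 and R ≥ 1, lim_{ε↓0} liminf_{n→∞} sup_{ξ ∈ Ĉ^R_p(𝓟_x,𝓟_y)} ξ( d(X_n,Y_n) ≤ ε ) > 0. Moreover, the condition (iii) sup_{ξ ∈ Ĉ(𝓟_x,𝓟_y)} lim_{ε↓0} liminf_{n→∞} ξ( d(X_n,Y_n) ≤ ε ) > 0 implies (ii) and hence (i). -/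
open MeasureTheory ProbabilityTheory Filter Topology

noncomputable section

/-- The set of couplings of two measures: probability measures on the product
whose marginals are exactly `P` and `Q`. -/
def Coupling {α : Type*} [MeasurableSpace α] (P Q : Measure α) : Set (Measure (α × α)) :=
  {ξ | IsProbabilityMeasure ξ ∧ ξ.map Prod.fst = P ∧ ξ.map Prod.snd = Q}

/-- The set of generalized couplings: probability measures on the product whose
marginals are absolutely continuous with respect to `P` and `Q` respectively. -/
def GenCoupling {α : Type*} [MeasurableSpace α] (P Q : Measure α) : Set (Measure (α × α)) :=
  {ξ | IsProbabilityMeasure ξ ∧ ξ.map Prod.fst ≪ P ∧ ξ.map Prod.snd ≪ Q}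

/-- The minimal (coupling) cost associated with a cost function `h`:
`h(μ,ν) = inf_{η ∈ C(μ,ν)} ∫ h dη`.  When `h` is a (bounded) metric this is the
Kantorovich–Rubinshtein (coupling) distance. -/
def couplingDist {α : Type*} [MeasurableSpace α] (h : α → α → ℝ) (μ ν : Measure α) : ℝ :=
  sInf ((fun η : Measure (α × α) => ∫ p, h p.1 p.2 ∂η) '' Coupling μ ν)

/-- Left shift on the path space `E^∞ = E^{ℤ₊}`. -/
def pathShift {E : Type*} : (ℕ → E) → (ℕ → E) := fun ω n => ω (n + 1)

/-- `L x` is the law on path space of the Markov chain with transition kernel `P`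
started at `x`: each `L x` is a probability measure, `x ↦ L x` is measurable, the
chain starts at `x`, and the shifted path has law `∫ L y P(x,dy)` (Markov property). -/
structure IsChainLaw {E : Type*} [MeasurableSpace E] (P : Kernel E E)
    (L : E → Measure (ℕ → E)) : Prop where
  prob : ∀ x, IsProbabilityMeasure (L x)
  meas : Measurable L
  init : ∀ x, (L x).map (fun ω => ω 0) = Measure.dirac x
  markov : ∀ x, (L x).map pathShift = (P x).bind L

/-- `d` is a second metric on `E` which is continuous with respect to the original
(Polish) topology of `E`. -/
structure IsAuxMetric {E : Type*} [TopologicalSpace E] (d : E → E → ℝ) : Prop where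
  nonneg : ∀ x y, 0 ≤ d x y
  symm : ∀ x y, d x y = d y x
  triangle : ∀ x y z, d x z ≤ d x y + d y z
  eq_zero_iff : ∀ x y, d x y = 0 ↔ x = y
  cont : Continuous fun p : E × E => d p.1 p.2

/-- A bounded real function. -/
def IsBddFun {E : Type*} (f : E → ℝ) : Prop := ∃ K, ∀ x, |f x| ≤ K

/-- Continuity of `f : E → ℝ` with respect to the metric `d`. -/
def DCont {E : Type*} (d : E → E → ℝ) (f : E → ℝ) : Prop :=
  ∀ x, ∀ ε > 0, ∃ δ > 0, ∀ y, d x y < δ → |f y - f x| < ε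

/-- The chain with one-step kernel `P` is `d`-Feller: `x ↦ ∫ f dP(x,·)` is
`d`-continuous for every bounded `d`-continuous `f`. -/
def DFeller {E : Type*} [MeasurableSpace E] (d : E → E → ℝ) (P : Kernel E E) : Prop :=
  ∀ f : E → ℝ, IsBddFun f → DCont d f → DCont d fun x => ∫ y, f y ∂(P x)

/-- `j : E → E'` realizes the complete metric space `E'` as the `d`-completion of `E`,
and for every `y ∈ E` there are `d`-continuous functions `ρ_n^y` on the completion
converging to `ρ(·,y)` on `E` and to `∞` off `E` (condition (2.4) of the paper). -/
structure ApproxCompletion {E : Type*} [PseudoMetricSpace E] (d : E → E → ℝ)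
    {E' : Type*} [MetricSpace E'] (j : E → E') : Prop where
  isometry : ∀ x y, dist (j x) (j y) = d x y
  dense : DenseRange j
  approx : ∀ y : E, ∃ f : ℕ → E' → ℝ,
    (∀ n, Continuous (f n)) ∧
    (∀ x : E, Tendsto (fun n => f n (j x)) atTop (𝓝 (dist x y))) ∧
    ∀ z : E', z ∉ Set.range j → Tendsto (fun n => f n z) atTop atTop

/-- Generalized couplings whose marginal Radon–Nikodym densities have `L^p` norm at
most `R`. -/
def GenCouplingLp {α : Type*} [MeasurableSpace α] (p R : ℝ) (P Q : Measure α) :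
    Set (Measure (α × α)) :=
  {ξ | ξ ∈ GenCoupling P Q ∧
    (∫⁻ ω, ((ξ.map Prod.fst).rnDeriv P ω) ^ p ∂P) ^ (1 / p) ≤ ENNReal.ofReal R ∧
    (∫⁻ ω, ((ξ.map Prod.snd).rnDeriv Q ω) ^ p ∂Q) ^ (1 / p) ≤ ENNReal.ofReal R}

section Conditions

variable {E : Type*} [MetricSpace E] [PolishSpace E] [MeasurableSpace E] [BorelSpace E]

/-- Condition (i): `lim_{ε↓0} liminf_n sup_{ξ ∈ C(𝓟_x,𝓟_y)} ξ(d(X_n,Y_n) ≤ ε) > 0`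
(the limit as `ε ↓ 0` of the monotone quantity is positive, i.e. there is a positive
lower bound `c` valid for every `ε > 0`). -/
def CondI (L : E → Measure (ℕ → E)) (d : E → E → ℝ) (x y : E) : Prop :=
  ∃ c > (0 : ℝ), ∀ ε > (0 : ℝ),
    c ≤ Filter.liminf (fun n : ℕ =>
      ⨆ ξ ∈ Coupling (L x) (L y),
        (ξ {ω : (ℕ → E) × (ℕ → E) | d (ω.1 n) (ω.2 n) ≤ ε}).toReal) atTop

/-- Condition (ii): for some `p > 1` and `R ≥ 1`,
`lim_{ε↓0} liminf_n sup_{ξ ∈ Ĉ^R_p(𝓟_x,𝓟_y)} ξ(d(X_n,Y_n) ≤ ε) > 0`. -/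
def CondII (L : E → Measure (ℕ → E)) (d : E → E → ℝ) (x y : E) : Prop :=
  ∃ p > (1 : ℝ), ∃ R ≥ (1 : ℝ), ∃ c > (0 : ℝ), ∀ ε > (0 : ℝ),
    c ≤ Filter.liminf (fun n : ℕ =>
      ⨆ ξ ∈ GenCouplingLp p R (L x) (L y),
        (ξ {ω : (ℕ → E) × (ℕ → E) | d (ω.1 n) (ω.2 n) ≤ ε}).toReal) atTop

/-- Condition (iii): `sup_{ξ ∈ Ĉ(𝓟_x,𝓟_y)} lim_{ε↓0} liminf_n ξ(d(X_n,Y_n) ≤ ε) > 0`,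
i.e. some generalized coupling `ξ` has `lim_{ε↓0} liminf_n ξ(d(X_n,Y_n) ≤ ε) > 0`. -/
def CondIII (L : E → Measure (ℕ → E)) (d : E → E → ℝ) (x y : E) : Prop :=
  ∃ ξ ∈ GenCoupling (L x) (L y), ∃ c > (0 : ℝ), ∀ ε > (0 : ℝ),
    c ≤ Filter.liminf (fun n : ℕ =>
      (ξ {ω : (ℕ → E) × (ℕ → E) | d (ω.1 n) (ω.2 n) ≤ ε}).toReal) atTop

end Conditions

/-!
If both marginal densities of a generalized coupling `ξ` are at most `k` on a set `B`, then
`k⁻¹ ξ|_B` has marginals dominated by `𝓟_x` and `𝓟_y`, and adding the normalised product of the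
missing marginal masses turns it into a genuine coupling `η`. Hence `ξ(A) ≤ k η(A)` plus the
`ξ`-mass of the tails where a density exceeds `k`. For a single `ξ ∈ Ĉ(𝓟_x,𝓟_y)` the tails vanish
as `k → ∞`, and on `Ĉ^R_p(𝓟_x,𝓟_y)` Chebyshev bounds them by `R^p / k^(p-1)` uniformly; either
way a positive lower bound for `ξ(d(X_n,Y_n) ≤ ε)` transfers to couplings, giving (ii) ⇒ (i)
and (iii) ⇒ (i). Conversely every coupling has densities `1`, so it lies in `Ĉ^R_p`.
-/

open ENNReal Set

namespace MeasureTheory.Measure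

variable {α : Type*} [MeasurableSpace α] {m μ : Measure α}

lemma restrict_setOf_rnDeriv_le_le_smul [SigmaFinite m] [SigmaFinite μ] (hac : m ≪ μ)
    (k : ℝ≥0∞) : m.restrict {x | m.rnDeriv μ x ≤ k} ≤ k • μ := by
  refine le_intro fun S hS _ => ?_
  rw [restrict_apply hS, ← setLIntegral_rnDeriv hac, smul_apply, smul_eq_mul]
  calc ∫⁻ x in S ∩ {x | m.rnDeriv μ x ≤ k}, m.rnDeriv μ x ∂μ
      ≤ ∫⁻ _ in S ∩ {x | m.rnDeriv μ x ≤ k}, k ∂μ :=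
        setLIntegral_mono measurable_const fun x hx => hx.2
    _ = k * μ (S ∩ {x | m.rnDeriv μ x ≤ k}) := setLIntegral_const _ _
    _ ≤ k * μ S := by gcongr; exact inter_subset_left

lemma rpow_mul_measure_lt_rnDeriv_le [SigmaFinite m] [SigmaFinite μ] (hac : m ≪ μ)
    {p : ℝ} (hp : 1 ≤ p) (k : ℝ≥0∞) :
    k ^ (p - 1) * m {x | k < m.rnDeriv μ x} ≤ ∫⁻ x, m.rnDeriv μ x ^ p ∂μ := by
  have hf : Measurable (m.rnDeriv μ) := measurable_rnDeriv _ _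
  calc k ^ (p - 1) * m {x | k < m.rnDeriv μ x}
      = ∫⁻ x in {x | k < m.rnDeriv μ x}, k ^ (p - 1) * m.rnDeriv μ x ∂μ := by
        rw [lintegral_const_mul _ hf, setLIntegral_rnDeriv hac]
    _ ≤ ∫⁻ x in {x | k < m.rnDeriv μ x}, m.rnDeriv μ x ^ p ∂μ := by
        refine setLIntegral_mono (by fun_prop) fun x hx => ?_
        calc k ^ (p - 1) * m.rnDeriv μ x
            ≤ m.rnDeriv μ x ^ (p - 1) * m.rnDeriv μ x ^ (1 : ℝ) := by
              rw [rpow_one]; gcongr; exact le_of_lt hx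
          _ = m.rnDeriv μ x ^ p := by
              rw [← rpow_add_of_nonneg _ _ (by linarith) zero_le_one, sub_add_cancel]
    _ ≤ ∫⁻ x, m.rnDeriv μ x ^ p ∂μ := setLIntegral_le_lintegral _ _

lemma tendsto_measure_natCast_lt_rnDeriv [IsFiniteMeasure m] (hac : m ≪ μ) :
    Tendsto (fun k : ℕ => m {x | (k : ℝ≥0∞) < m.rnDeriv μ x}) atTop (𝓝 0) := by
  have hf : Measurable (m.rnDeriv μ) := measurable_rnDeriv _ _
  have hlim := tendsto_measure_iInter_atTop (μ := m)
    (fun k : ℕ => (measurableSet_lt measurable_const hf).nullMeasurableSet)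
    (fun i j hij x (hx : (j : ℝ≥0∞) < _) => (Nat.cast_le.2 hij).trans_lt hx)
    ⟨0, measure_ne_top _ _⟩
  have hinter : ⋂ k : ℕ, {x | (k : ℝ≥0∞) < m.rnDeriv μ x} = {x | ¬ m.rnDeriv μ x < ⊤} := by
    ext x
    simp only [mem_iInter]
    refine ⟨fun h => not_lt.2 (top_le_iff.2 (eq_top_of_forall_nnreal_le fun r => ?_)),
      fun h n => (not_lt.1 h).trans_lt' (natCast_lt_top n)⟩
    obtain ⟨n, hn⟩ := exists_nat_gt r
    exact (le_of_lt (by exact_mod_cast hn)).trans (h n).le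
  rwa [hinter, ae_iff.1 (hac.ae_le (rnDeriv_lt_top m μ))] at hlim

lemma measure_natCast_lt_rnDeriv_le_of_lintegral_rpow_le [IsFiniteMeasure m] [SigmaFinite μ]
    (hac : m ≪ μ) {p R b : ℝ} (hp : 1 < p) (hR : 0 ≤ R)
    (hm : (∫⁻ x, m.rnDeriv μ x ^ p ∂μ) ^ (1 / p) ≤ ENNReal.ofReal R) {k : ℕ} (hk : k ≠ 0)
    (hkb : R ^ p ≤ (k : ℝ) ^ (p - 1) * b) :
    m {x | (k : ℝ≥0∞) < m.rnDeriv μ x} ≤ ENNReal.ofReal b := by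
  have hp₀ : 0 ≤ p - 1 := by linarith
  have hkp : (k : ℝ≥0∞) ^ (p - 1) = ENNReal.ofReal ((k : ℝ) ^ (p - 1)) := by
    rw [← ofReal_natCast, ofReal_rpow_of_nonneg (Nat.cast_nonneg _) hp₀]
  rw [← ENNReal.mul_le_mul_iff_right (a := (k : ℝ≥0∞) ^ (p - 1))
    (rpow_pos (by exact_mod_cast Nat.pos_of_ne_zero hk) (natCast_ne_top k)).ne'
    (rpow_ne_top_of_nonneg hp₀ (natCast_ne_top k))]
  calc (k : ℝ≥0∞) ^ (p - 1) * m {x | (k : ℝ≥0∞) < m.rnDeriv μ x}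
      ≤ ∫⁻ x, m.rnDeriv μ x ^ p ∂μ := rpow_mul_measure_lt_rnDeriv_le hac hp.le _
    _ ≤ ENNReal.ofReal R ^ p := by
        rwa [one_div, ENNReal.rpow_inv_le_iff (by linarith)] at hm
    _ ≤ (k : ℝ≥0∞) ^ (p - 1) * ENNReal.ofReal b := by
        rw [ofReal_rpow_of_nonneg hR (by linarith), hkp,
          ← ofReal_mul (Real.rpow_nonneg (Nat.cast_nonneg _) _)]
        exact ofReal_le_ofReal hkb

end MeasureTheory.Measure

section Extension

variable {α : Type*} [MeasurableSpace α]

lemma map_smul_prod_of_measure_univ_eq {ρ₁ ρ₂ : Measure α} [IsFiniteMeasure ρ₁]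
    [IsFiniteMeasure ρ₂] (h : ρ₁ univ = ρ₂ univ) :
    ((ρ₁ univ)⁻¹ • ρ₁.prod ρ₂).map Prod.fst = ρ₁ ∧
      ((ρ₁ univ)⁻¹ • ρ₁.prod ρ₂).map Prod.snd = ρ₂ := by
  rw [Measure.map_smul, Measure.map_smul, Measure.map_fst_prod, Measure.map_snd_prod, smul_smul,
    smul_smul, ← h]
  by_cases h0 : ρ₁ univ = 0
  · have h0' : ρ₂ univ = 0 := h ▸ h0
    rw [Measure.measure_univ_eq_zero] at h0 h0'
    simp [h0, h0']
  · rw [ENNReal.inv_mul_cancel h0 (measure_ne_top _ _), one_smul, one_smul]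
    exact ⟨rfl, rfl⟩

lemma exists_coupling_ge_of_map_le (μ ν : Measure α) [IsProbabilityMeasure μ]
    [IsProbabilityMeasure ν] {ζ : Measure (α × α)} (h₁ : ζ.map Prod.fst ≤ μ)
    (h₂ : ζ.map Prod.snd ≤ ν) : ∃ η ∈ Coupling μ ν, ζ ≤ η := by
  have : IsFiniteMeasure (ζ.map Prod.fst) := isFiniteMeasure_of_le μ h₁
  have : IsFiniteMeasure (ζ.map Prod.snd) := isFiniteMeasure_of_le ν h₂
  set ρ₁ := μ - ζ.map Prod.fst
  set ρ₂ := ν - ζ.map Prod.snd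
  have : IsFiniteMeasure ρ₁ := isFiniteMeasure_of_le μ Measure.sub_le
  have : IsFiniteMeasure ρ₂ := isFiniteMeasure_of_le ν Measure.sub_le
  have hmass : ρ₁ univ = ρ₂ univ := by
    rw [Measure.sub_apply .univ h₁, Measure.sub_apply .univ h₂,
      Measure.map_apply measurable_fst .univ, Measure.map_apply measurable_snd .univ,
      preimage_univ, preimage_univ, measure_univ (μ := μ), measure_univ (μ := ν)]
  obtain ⟨hfst, hsnd⟩ := map_smul_prod_of_measure_univ_eq hmass
  set η := ζ + (ρ₁ univ)⁻¹ • ρ₁.prod ρ₂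
  have hη₁ : η.map Prod.fst = μ := by
    rw [Measure.map_add _ _ measurable_fst, hfst, add_comm, Measure.sub_add_cancel_of_le h₁]
  have hη₂ : η.map Prod.snd = ν := by
    rw [Measure.map_add _ _ measurable_snd, hsnd, add_comm, Measure.sub_add_cancel_of_le h₂]
  have hηprob : IsProbabilityMeasure η := by
    constructor
    simpa [Measure.map_apply measurable_fst MeasurableSet.univ] using congrArg (· univ) hη₁
  exact ⟨η, ⟨hηprob, hη₁, hη₂⟩, Measure.le_add_right le_rfl⟩

end Extension

section Truncation

variable {α : Type*} [MeasurableSpace α] (μ ν : Measure α) [IsProbabilityMeasure μ]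
  [IsProbabilityMeasure ν]

lemma exists_coupling_le_mul_add_tails {ξ : Measure (α × α)} (hξ : ξ ∈ GenCoupling μ ν)
    {k : ℝ≥0∞} (hk₀ : k ≠ 0) (hk : k ≠ ∞) :
    ∃ η ∈ Coupling μ ν, ∀ A, ξ A ≤ k * η A +
      (ξ.map Prod.fst {x | k < (ξ.map Prod.fst).rnDeriv μ x} +
        ξ.map Prod.snd {y | k < (ξ.map Prod.snd).rnDeriv ν y}) := by
  obtain ⟨hprob, hac₁, hac₂⟩ := hξ
  have : IsProbabilityMeasure (ξ.map Prod.fst) := Measure.isProbabilityMeasure_map (by fun_prop)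
  have : IsProbabilityMeasure (ξ.map Prod.snd) := Measure.isProbabilityMeasure_map (by fun_prop)
  set T₁ := {x | (ξ.map Prod.fst).rnDeriv μ x ≤ k}
  set T₂ := {y | (ξ.map Prod.snd).rnDeriv ν y ≤ k}
  have hT₁ : MeasurableSet T₁ := measurableSet_le (Measure.measurable_rnDeriv _ _) measurable_const
  have hT₂ : MeasurableSet T₂ := measurableSet_le (Measure.measurable_rnDeriv _ _) measurable_const
  set B := Prod.fst ⁻¹' T₁ ∩ Prod.snd ⁻¹' T₂
  have hB : MeasurableSet B := (measurable_fst hT₁).inter (measurable_snd hT₂)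
  have marginal_le : ∀ {π : α × α → α} {ρ : Measure α} {T : Set α}, Measurable π →
      MeasurableSet T → B ⊆ π ⁻¹' T → (ξ.map π).restrict T ≤ k • ρ →
      (k⁻¹ • ξ.restrict B).map π ≤ ρ := by
    intro π ρ T hπ hT hBT hle
    calc (k⁻¹ • ξ.restrict B).map π = k⁻¹ • (ξ.restrict B).map π := Measure.map_smul _ _ _
      _ ≤ k⁻¹ • (ξ.map π).restrict T := by
          rw [Measure.restrict_map hπ hT]
          gcongr
      _ ≤ k⁻¹ • k • ρ := by gcongr
      _ = ρ := by rw [smul_smul, ENNReal.inv_mul_cancel hk₀ hk, one_smul]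
  obtain ⟨η, hη, hζη⟩ := exists_coupling_ge_of_map_le μ ν
    (marginal_le measurable_fst hT₁ inter_subset_left
      (Measure.restrict_setOf_rnDeriv_le_le_smul hac₁ k))
    (marginal_le measurable_snd hT₂ inter_subset_right
      (Measure.restrict_setOf_rnDeriv_le_le_smul hac₂ k))
  refine ⟨η, hη, fun A => ?_⟩
  have hgood : ξ (A ∩ B) ≤ k * η A :=
    calc ξ (A ∩ B) = k * (k⁻¹ • ξ.restrict B) A := by
          rw [Measure.smul_apply, smul_eq_mul, Measure.restrict_apply' hB, ← mul_assoc,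
            ENNReal.mul_inv_cancel hk₀ hk, one_mul]
      _ ≤ k * η A := by gcongr
  have hbad : ξ (A \ B) ≤ ξ.map Prod.fst T₁ᶜ + ξ.map Prod.snd T₂ᶜ := by
    rw [Measure.map_apply measurable_fst hT₁.compl, Measure.map_apply measurable_snd hT₂.compl]
    refine (measure_mono fun ω hω => ?_).trans (measure_union_le _ _)
    simpa [B, imp_iff_not_or] using hω.2
  calc ξ A ≤ ξ (A ∩ B) + ξ (A \ B) := measure_le_inter_add_sdiff _ _ _
    _ ≤ _ := add_le_add hgood (by simpa [T₁, T₂, compl_ofPred] using hbad)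

lemma exists_coupling_toReal_le_mul_add {ξ : Measure (α × α)} (hξ : ξ ∈ GenCoupling μ ν)
    {k : ℕ} (hk : k ≠ 0) {b : ℝ} (hb : 0 ≤ b)
    (h₁ : ξ.map Prod.fst {x | (k : ℝ≥0∞) < (ξ.map Prod.fst).rnDeriv μ x} ≤ ENNReal.ofReal b)
    (h₂ : ξ.map Prod.snd {y | (k : ℝ≥0∞) < (ξ.map Prod.snd).rnDeriv ν y} ≤ ENNReal.ofReal b) :
    ∃ η ∈ Coupling μ ν, ∀ A, (ξ A).toReal ≤ k * (η A).toReal + 2 * b := by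
  obtain ⟨η, hη, hle⟩ := exists_coupling_le_mul_add_tails μ ν hξ (k := k) (by simpa using hk)
    (natCast_ne_top k)
  have : IsProbabilityMeasure η := hη.1
  refine ⟨η, hη, fun A => toReal_le_of_le_ofReal (by positivity) ((hle A).trans ?_)⟩
  rw [ofReal_add (by positivity) (by positivity), ofReal_mul (Nat.cast_nonneg _), ofReal_natCast,
    ofReal_toReal (measure_ne_top _ _), two_mul, ofReal_add hb hb]
  gcongr

lemma exists_coupling_toReal_le_mul_add_of_genCoupling {ξ : Measure (α × α)}
    (hξ : ξ ∈ GenCoupling μ ν) {b : ℝ} (hb : 0 < b) :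
    ∃ k : ℕ, k ≠ 0 ∧ ∃ η ∈ Coupling μ ν, ∀ A, (ξ A).toReal ≤ k * (η A).toReal + 2 * b := by
  have : IsProbabilityMeasure ξ := hξ.1
  have : IsProbabilityMeasure (ξ.map Prod.fst) := Measure.isProbabilityMeasure_map (by fun_prop)
  have : IsProbabilityMeasure (ξ.map Prod.snd) := Measure.isProbabilityMeasure_map (by fun_prop)
  have hb' : (0 : ℝ≥0∞) < ENNReal.ofReal b := ofReal_pos.2 hb
  obtain ⟨k, hk, h₁, h₂⟩ := ((eventually_ne_atTop 0).and
    (((Measure.tendsto_measure_natCast_lt_rnDeriv hξ.2.1).eventually_lt_const hb').and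
      ((Measure.tendsto_measure_natCast_lt_rnDeriv hξ.2.2).eventually_lt_const hb'))).exists
  exact ⟨k, hk, exists_coupling_toReal_le_mul_add μ ν hξ hk hb.le h₁.le h₂.le⟩

lemma exists_coupling_toReal_le_mul_add_of_genCouplingLp {p R b : ℝ} (hp : 1 < p) (hR : 0 ≤ R)
    (hb : 0 < b) :
    ∃ k : ℕ, k ≠ 0 ∧ ∀ ξ ∈ GenCouplingLp p R μ ν,
      ∃ η ∈ Coupling μ ν, ∀ A, (ξ A).toReal ≤ k * (η A).toReal + 2 * b := by
  have hgrow : Tendsto (fun k : ℕ => (k : ℝ) ^ (p - 1) * b) atTop atTop :=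
    ((tendsto_rpow_atTop (by linarith)).comp tendsto_natCast_atTop_atTop).atTop_mul_const hb
  obtain ⟨k, hk, hkb⟩ :=
    ((eventually_ne_atTop 0).and (hgrow.eventually_ge_atTop (R ^ p))).exists
  refine ⟨k, hk, fun ξ ⟨hξ, hR₁, hR₂⟩ => ?_⟩
  have : IsProbabilityMeasure ξ := hξ.1
  have : IsProbabilityMeasure (ξ.map Prod.fst) := Measure.isProbabilityMeasure_map (by fun_prop)
  have : IsProbabilityMeasure (ξ.map Prod.snd) := Measure.isProbabilityMeasure_map (by fun_prop)
  exact exists_coupling_toReal_le_mul_add μ ν hξ hk hb.le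
    (Measure.measure_natCast_lt_rnDeriv_le_of_lintegral_rpow_le hξ.2.1 hp hR hR₁ hk hkb)
    (Measure.measure_natCast_lt_rnDeriv_le_of_lintegral_rpow_le hξ.2.2 hp hR hR₂ hk hkb)

end Truncation

section BiSup

variable {β ι : Type*} [MeasurableSpace β] {S T : Set (Measure β)}

lemma biSup_toReal_measure_nonneg (A : Set β) : 0 ≤ ⨆ ξ ∈ S, (ξ A).toReal :=
  Real.iSup_nonneg fun _ => Real.iSup_nonneg fun _ => toReal_nonneg

lemma biSup_toReal_measure_le {A : Set β} {b : ℝ} (hb : 0 ≤ b)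
    (h : ∀ ξ ∈ S, (ξ A).toReal ≤ b) : ⨆ ξ ∈ S, (ξ A).toReal ≤ b :=
  Real.iSup_le (fun ξ => Real.iSup_le (h ξ) hb) hb

lemma biSup_toReal_measure_le_one (hS : ∀ ξ ∈ S, IsProbabilityMeasure ξ) (A : Set β) :
    ⨆ ξ ∈ S, (ξ A).toReal ≤ 1 :=
  biSup_toReal_measure_le zero_le_one fun ξ hξ =>
    have := hS ξ hξ
    measureReal_le_one

lemma le_biSup_toReal_measure (hS : ∀ ξ ∈ S, IsProbabilityMeasure ξ) {ξ : Measure β}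
    (hξ : ξ ∈ S) (A : Set β) : (ξ A).toReal ≤ ⨆ ζ ∈ S, (ζ A).toReal := by
  refine le_ciSup₂ (f := fun ζ (_ : ζ ∈ S) => (ζ A).toReal) ⟨1, ?_⟩ ξ hξ
  simp only [upperBounds, mem_iUnion, mem_range, mem_ofPred_eq, forall_exists_index]
  rintro _ ζ hζ rfl
  have := hS ζ hζ
  exact measureReal_le_one

lemma biSup_toReal_measure_mono (hT : ∀ ξ ∈ T, IsProbabilityMeasure ξ) (hST : S ⊆ T)
    (A : Set β) : ⨆ ξ ∈ S, (ξ A).toReal ≤ ⨆ ξ ∈ T, (ξ A).toReal :=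
  biSup_toReal_measure_le (biSup_toReal_measure_nonneg A) fun _ hξ =>
    le_biSup_toReal_measure hT (hST hξ) A

lemma isBoundedUnder_ge_biSup_toReal_measure (l : Filter ι) (A : ι → Set β) :
    IsBoundedUnder (· ≥ ·) l fun i => ⨆ ξ ∈ S, (ξ (A i)).toReal :=
  isBoundedUnder_of ⟨0, fun _ => biSup_toReal_measure_nonneg _⟩

lemma isBoundedUnder_le_biSup_toReal_measure (hS : ∀ ξ ∈ S, IsProbabilityMeasure ξ)
    (l : Filter ι) (A : ι → Set β) :
    IsBoundedUnder (· ≤ ·) l fun i => ⨆ ξ ∈ S, (ξ (A i)).toReal :=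
  isBoundedUnder_of ⟨1, fun _ => biSup_toReal_measure_le_one hS _⟩

end BiSup

lemma le_liminf_of_le_mul_add {ι : Type*} {l : Filter ι} [l.NeBot] {u v : ι → ℝ} {K b c : ℝ}
    (hK : 0 < K) (hu : IsBoundedUnder (· ≥ ·) l u) (hv : IsBoundedUnder (· ≤ ·) l v)
    (hc : c ≤ liminf u l) (huv : ∀ i, u i ≤ K * v i + b) :
    (c - b) / K ≤ liminf v l := by
  refine le_of_forall_lt_imp_le_of_dense fun a ha => le_liminf_of_le hv.isCoboundedUnder_ge ?_
  have hKa : K * a + b < liminf u l := by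
    rw [lt_div_iff₀ hK] at ha
    linarith
  filter_upwards [eventually_lt_of_lt_liminf hKa hu] with i hi
  exact le_of_lt (lt_of_mul_lt_mul_left (by linarith [huv i]) hK.le)

section CouplingLiminf

variable {α : Type*} [MeasurableSpace α] (μ ν : Measure α) [IsProbabilityMeasure μ]
  [IsProbabilityMeasure ν]

lemma coupling_subset_genCouplingLp {p R : ℝ} (hR : 1 ≤ R) :
    Coupling μ ν ⊆ GenCouplingLp p R μ ν := by
  have hself : ∀ (ρ : Measure α) [IsProbabilityMeasure ρ],
      (∫⁻ x, ρ.rnDeriv ρ x ^ p ∂ρ) ^ (1 / p) ≤ ENNReal.ofReal R := by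
    intro ρ _
    rw [lintegral_congr_ae ((Measure.rnDeriv_self ρ).mono fun x hx => by rw [hx, one_rpow]),
      lintegral_one, measure_univ, one_rpow]
    exact one_le_ofReal.2 hR
  rintro ξ ⟨hprob, h₁, h₂⟩
  refine ⟨⟨hprob, h₁.absolutelyContinuous, h₂.absolutelyContinuous⟩, ?_, ?_⟩
  · rw [h₁]; exact hself μ
  · rw [h₂]; exact hself ν

lemma liminf_biSup_coupling_le_genCouplingLp {p R : ℝ} (hR : 1 ≤ R) (A : ℕ → Set (α × α)) :
    liminf (fun n => ⨆ η ∈ Coupling μ ν, (η (A n)).toReal) atTop ≤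
      liminf (fun n => ⨆ ξ ∈ GenCouplingLp p R μ ν, (ξ (A n)).toReal) atTop :=
  liminf_le_liminf
    (.of_forall fun n => biSup_toReal_measure_mono (fun _ hξ => hξ.1.1)
      (coupling_subset_genCouplingLp μ ν hR) (A n))
    (isBoundedUnder_ge_biSup_toReal_measure _ A)
    (isBoundedUnder_le_biSup_toReal_measure (fun _ hξ => hξ.1.1) _ A).isCoboundedUnder_ge

lemma exists_pos_le_liminf_coupling_of_genCouplingLp {p R c : ℝ} (hp : 1 < p) (hR : 0 ≤ R)
    (hc : 0 < c) :
    ∃ c' > 0, ∀ A : ℕ → Set (α × α),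
      c ≤ liminf (fun n => ⨆ ξ ∈ GenCouplingLp p R μ ν, (ξ (A n)).toReal) atTop →
        c' ≤ liminf (fun n => ⨆ η ∈ Coupling μ ν, (η (A n)).toReal) atTop := by
  obtain ⟨k, hk, hdom⟩ :=
    exists_coupling_toReal_le_mul_add_of_genCouplingLp μ ν hp hR (b := c / 4) (by positivity)
  have hk₀ : (0 : ℝ) < k := by exact_mod_cast Nat.pos_of_ne_zero hk
  refine ⟨(c - 2 * (c / 4)) / k, div_pos (by linarith) hk₀, fun A hA =>
    le_liminf_of_le_mul_add hk₀ (isBoundedUnder_ge_biSup_toReal_measure _ A)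
      (isBoundedUnder_le_biSup_toReal_measure (fun _ hη => hη.1) _ A) hA fun n =>
        biSup_toReal_measure_le (by
          have := biSup_toReal_measure_nonneg (S := Coupling μ ν) (A n)
          positivity) fun ξ hξ => ?_⟩
  obtain ⟨η, hη, hle⟩ := hdom ξ hξ
  exact (hle _).trans (by gcongr; exact le_biSup_toReal_measure (fun _ hζ => hζ.1) hη _)

lemma exists_pos_le_liminf_coupling_of_genCoupling {ξ : Measure (α × α)}
    (hξ : ξ ∈ GenCoupling μ ν) {c : ℝ} (hc : 0 < c) :
    ∃ c' > 0, ∀ A : ℕ → Set (α × α),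
      c ≤ liminf (fun n => (ξ (A n)).toReal) atTop →
        c' ≤ liminf (fun n => ⨆ η ∈ Coupling μ ν, (η (A n)).toReal) atTop := by
  obtain ⟨k, hk, η, hη, hle⟩ :=
    exists_coupling_toReal_le_mul_add_of_genCoupling μ ν hξ (b := c / 4) (by positivity)
  have hk₀ : (0 : ℝ) < k := by exact_mod_cast Nat.pos_of_ne_zero hk
  exact ⟨(c - 2 * (c / 4)) / k, div_pos (by linarith) hk₀, fun A hA =>
    le_liminf_of_le_mul_add hk₀ (isBoundedUnder_of ⟨0, fun _ => toReal_nonneg⟩)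
      (isBoundedUnder_le_biSup_toReal_measure (fun _ hη => hη.1) _ A) hA fun n =>
        (hle _).trans (by gcongr; exact le_biSup_toReal_measure (fun _ hζ => hζ.1) hη _)⟩

end CouplingLiminf

theorem conditions_equivalence_general
    {E : Type*} [MetricSpace E] [PolishSpace E] [MeasurableSpace E] [BorelSpace E]
    (P : Kernel E E)
    (L : E → Measure (ℕ → E)) (hL : IsChainLaw P L)
    (d : E → E → ℝ)
    (x y : E) :
    (CondI L d x y ↔ CondII L d x y) ∧
    (CondIII L d x y → CondII L d x y) ∧
    (CondIII L d x y → CondI L d x y) := by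
  have := hL.prob x
  have := hL.prob y
  have hI_II : CondI L d x y → CondII L d x y := fun ⟨c, hc, h⟩ =>
    ⟨2, one_lt_two, 1, le_rfl, c, hc, fun ε hε =>
      (h ε hε).trans (liminf_biSup_coupling_le_genCouplingLp _ _ le_rfl _)⟩
  have hII_I : CondII L d x y → CondI L d x y := by
    rintro ⟨p, hp, R, hR, c, hc, h⟩
    obtain ⟨c', hc', hlim⟩ :=
      exists_pos_le_liminf_coupling_of_genCouplingLp (L x) (L y) hp (zero_le_one.trans hR) hc
    exact ⟨c', hc', fun ε hε => hlim _ (h ε hε)⟩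
  have hIII_I : CondIII L d x y → CondI L d x y := by
    rintro ⟨ξ, hξ, c, hc, h⟩
    obtain ⟨c', hc', hlim⟩ := exists_pos_le_liminf_coupling_of_genCoupling (L x) (L y) hξ hc
    exact ⟨c', hc', fun ε hε => hlim _ (h ε hε)⟩
  exact ⟨⟨hI_II, hII_I⟩, hI_II ∘ hIII_I, hIII_I⟩

/-- **Theorem 2.4, part II.**  Conditions (i) and (ii) are equivalent, and condition
(iii) implies (ii) (and hence (i)). -/
theorem conditions_equivalence
    {E : Type*} [MetricSpace E] [PolishSpace E] [MeasurableSpace E] [BorelSpace E]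
    (hρ : ∀ x y : E, dist x y ≤ 1)
    (P : Kernel E E) [IsMarkovKernel P]
    (L : E → Measure (ℕ → E)) (hL : IsChainLaw P L)
    (d : E → E → ℝ) (hd : IsAuxMetric d) (hd1 : ∀ x y, d x y ≤ 1)
    (x y : E) :
    (CondI L d x y ↔ CondII L d x y) ∧
    (CondIII L d x y → CondII L d x y) ∧
    (CondIII L d x y → CondI L d x y) :=
  conditions_equivalence_general P L hL d x y
end
end

section
/- Let p > 1 and R > 0 be fixed. Then for each α > 0 there exists α' > 0 such that: for every pair of probability measures 𝓟,𝓠 on E^∞ and every ξ ∈ Ĉ^R_p(𝓟,𝓠) there exists a coupling ζ ∈ C(𝓟,𝓠) such that for each measurable set A ⊆ E^∞×E^∞ with ξ(A) ≥ α one has ζ(A) ≥ α'. -/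
open MeasureTheory ProbabilityTheory Filter Topology
open scoped ENNReal NNReal

noncomputable section

/-- Markov-type bound: the mass that an a.c. measure puts on the set where its density
exceeds `M'` is at most `(∫ f^p) / M'^(p-1)`. -/
lemma markov_aux {Ω : Type*} [MeasurableSpace Ω] (P ν : Measure Ω)
    [IsFiniteMeasure ν] [IsFiniteMeasure P] (hac : ν ≪ P)
    {p : ℝ} (hp : 1 < p) {Rp : ℝ≥0∞}
    (hL : ∫⁻ ω, (ν.rnDeriv P ω) ^ p ∂P ≤ Rp) {M' : ℝ≥0∞} (hM1 : 1 ≤ M') (hMtop : M' ≠ ⊤) :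
    ν {ω | M' < ν.rnDeriv P ω} ≤ Rp / M' ^ (p - 1) := by
  set f := ν.rnDeriv P with hfdef
  have hfm : Measurable f := Measure.measurable_rnDeriv _ _
  have hS : MeasurableSet {ω | M' < f ω} := measurableSet_lt measurable_const hfm
  set S := {ω | M' < f ω} with hSdef
  have hM0 : M' ≠ 0 := fun h => by simp [h] at hM1
  have hpow_ne_top : M' ^ (p - 1) ≠ ⊤ := by
    simp [ENNReal.rpow_eq_top_iff, hMtop, hM0]
  have hpow_ne_zero : M' ^ (p - 1) ≠ 0 := by
    simp [ENNReal.rpow_eq_zero_iff, hM0, hMtop]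
  have h1 : ν S = ∫⁻ ω in S, f ω ∂P := by
    conv_lhs => rw [← Measure.withDensity_rnDeriv_eq ν P hac]
    exact withDensity_apply _ hS
  have hpt : ∀ ω ∈ S, M' ^ (p - 1) * f ω ≤ f ω ^ p := by
    intro ω hω
    have hωf : M' < f ω := hω
    rcases eq_or_ne (f ω) ⊤ with htop | htop
    · rw [htop, ENNReal.top_rpow_of_pos (by linarith)]
      exact le_top
    · have h0 : f ω ≠ 0 := (zero_lt_one.trans_le (hM1.trans hωf.le)).ne'
      have heq : f ω ^ p = f ω ^ (p - 1) * f ω ^ (1:ℝ) := by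
        rw [← ENNReal.rpow_add _ _ h0 htop]; norm_num
      rw [ENNReal.rpow_one] at heq
      rw [heq]
      exact mul_le_mul' (ENNReal.rpow_le_rpow hωf.le (by linarith)) le_rfl
  have h2 : M' ^ (p - 1) * ν S ≤ ∫⁻ ω, f ω ^ p ∂P := by
    rw [h1, ← lintegral_const_mul _ hfm]
    calc ∫⁻ ω in S, M' ^ (p - 1) * f ω ∂P
        ≤ ∫⁻ ω in S, f ω ^ p ∂P := setLIntegral_mono (hfm.pow_const p) hpt
      _ ≤ ∫⁻ ω, f ω ^ p ∂P := setLIntegral_le_lintegral _ _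
  rw [ENNReal.le_div_iff_mul_le (Or.inl hpow_ne_zero) (Or.inl hpow_ne_top), mul_comm]
  exact h2.trans hL

lemma map_fst_withDensity {Ω : Type*} [MeasurableSpace Ω] (ξ : Measure (Ω × Ω))
    {u : Ω → ℝ≥0∞} (hu : Measurable u) :
    (ξ.withDensity (fun z => u z.1)).map Prod.fst = (ξ.map Prod.fst).withDensity u := by
  ext s hs
  have hs' : MeasurableSet (Prod.fst ⁻¹' s : Set (Ω × Ω)) := measurable_fst hs
  rw [Measure.map_apply measurable_fst hs, withDensity_apply _ hs', withDensity_apply _ hs,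
    ← lintegral_indicator hs' _, ← lintegral_indicator hs _,
    lintegral_map (hu.indicator hs) measurable_fst]
  rfl

lemma map_snd_withDensity {Ω : Type*} [MeasurableSpace Ω] (ξ : Measure (Ω × Ω))
    {u : Ω → ℝ≥0∞} (hu : Measurable u) :
    (ξ.withDensity (fun z => u z.2)).map Prod.snd = (ξ.map Prod.snd).withDensity u := by
  ext s hs
  have hs' : MeasurableSet (Prod.snd ⁻¹' s : Set (Ω × Ω)) := measurable_snd hs
  rw [Measure.map_apply measurable_snd hs, withDensity_apply _ hs', withDensity_apply _ hs,
    ← lintegral_indicator hs' _, ← lintegral_indicator hs _,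
    lintegral_map (hu.indicator hs) measurable_snd]
  rfl

theorem coupling_from_Lp_gen_coupling'
    {Ω : Type*} [MeasurableSpace Ω]
    (p R : ℝ) (hp : 1 < p) (hR : 0 < R) :
    ∀ α > (0 : ℝ), ∃ α' > (0 : ℝ),
      ∀ PP QQ : Measure Ω, IsProbabilityMeasure PP → IsProbabilityMeasure QQ →
        ∀ ξ ∈ GenCouplingLp p R PP QQ,
          ∃ ζ ∈ Coupling PP QQ,
            ∀ A : Set (Ω × Ω), MeasurableSet A →
              ENNReal.ofReal α ≤ ξ A → ENNReal.ofReal α' ≤ ζ A := by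
  intro α hα
  have hp0 : (0:ℝ) < p := by linarith
  have hp1 : (0:ℝ) < p - 1 := by linarith
  set M : ℝ := max 1 ((4 * R ^ p / α) ^ (1 / (p - 1))) with hMdef
  have hM1 : (1:ℝ) ≤ M := le_max_left _ _
  have hM0 : (0:ℝ) < M := lt_of_lt_of_le one_pos hM1
  have hMbig : R ^ p / M ^ (p - 1) ≤ α / 4 := by
    have hc0 : (0:ℝ) ≤ 4 * R ^ p / α := by positivity
    have h1 : (4 * R ^ p / α) ^ (1 / (p - 1)) ≤ M := le_max_right _ _
    have h2 : 4 * R ^ p / α ≤ M ^ (p - 1) := by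
      have := Real.rpow_le_rpow (Real.rpow_nonneg hc0 _) h1 hp1.le
      rwa [← Real.rpow_mul hc0, one_div_mul_cancel hp1.ne', Real.rpow_one] at this
    have hMp0 : (0:ℝ) < M ^ (p - 1) := Real.rpow_pos_of_pos hM0 _
    have h3 : 4 * R ^ p ≤ M ^ (p - 1) * α := by rwa [div_le_iff₀ hα] at h2
    rw [div_le_div_iff₀ hMp0 (by norm_num : (0:ℝ) < 4)]
    nlinarith
  refine ⟨α / (2 * M ^ 2), by positivity, ?_⟩
  intro PP QQ hPP hQQ ξ hξ
  obtain ⟨⟨hξprob, hac1, hac2⟩, hL1, hL2⟩ := hξ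
  haveI := hξprob
  haveI : IsProbabilityMeasure (ξ.map Prod.fst) :=
    Measure.isProbabilityMeasure_map measurable_fst.aemeasurable
  haveI : IsProbabilityMeasure (ξ.map Prod.snd) :=
    Measure.isProbabilityMeasure_map measurable_snd.aemeasurable
  set f := (ξ.map Prod.fst).rnDeriv PP with hfdef
  set g := (ξ.map Prod.snd).rnDeriv QQ with hgdef
  have hfm : Measurable f := Measure.measurable_rnDeriv _ _
  have hgm : Measurable g := Measure.measurable_rnDeriv _ _
  set M' : ℝ≥0∞ := ENNReal.ofReal M with hM'def
  have hM'1 : 1 ≤ M' := ENNReal.one_le_ofReal.mpr hM1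
  have hM'top : M' ≠ ⊤ := ENNReal.ofReal_ne_top
  set u : Ω → ℝ≥0∞ := fun x => (max (f x) 1)⁻¹ with hudef
  set v : Ω → ℝ≥0∞ := fun y => (max (g y) 1)⁻¹ with hvdef
  have hum : Measurable u := (hfm.max measurable_const).inv
  have hvm : Measurable v := (hgm.max measurable_const).inv
  set w : Ω × Ω → ℝ≥0∞ := fun z => u z.1 * v z.2 with hwdef
  have hwm : Measurable w := ((hum.comp measurable_fst).mul (hvm.comp measurable_snd))
  set ν : Measure (Ω × Ω) := ξ.withDensity w with hνdef
  have hu1 : ∀ x, u x ≤ 1 := fun x => ENNReal.inv_le_one.mpr (le_max_right _ _)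
  have hv1 : ∀ y, v y ≤ 1 := fun y => ENNReal.inv_le_one.mpr (le_max_right _ _)
  have hfu : ∀ x, f x * u x ≤ 1 := by
    intro x
    calc f x * u x ≤ max (f x) 1 * (max (f x) 1)⁻¹ :=
          mul_le_mul_left (le_max_left _ _) _
      _ ≤ 1 := ENNReal.mul_inv_le_one _
  have hgv : ∀ y, g y * v y ≤ 1 := by
    intro y
    calc g y * v y ≤ max (g y) 1 * (max (g y) 1)⁻¹ :=
          mul_le_mul_left (le_max_left _ _) _
      _ ≤ 1 := ENNReal.mul_inv_le_one _
  have hνle : ν ≤ ξ := by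
    calc ν ≤ ξ.withDensity 1 := by
          apply withDensity_mono
          filter_upwards with z
          exact (mul_le_mul' (hu1 _) (hv1 _)).trans (by norm_num)
      _ = ξ := withDensity_one
  haveI : IsFiniteMeasure ν := isFiniteMeasure_of_le ξ hνle
  have hmarg1 : ν.map Prod.fst ≤ PP := by
    calc ν.map Prod.fst ≤ (ξ.withDensity fun z => u z.1).map Prod.fst := by
          refine Measure.map_mono ?_ measurable_fst
          apply withDensity_mono
          filter_upwards with z
          calc u z.1 * v z.2 ≤ u z.1 * 1 := mul_le_mul_right (hv1 _) _
            _ = u z.1 := mul_one _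
      _ = (ξ.map Prod.fst).withDensity u := map_fst_withDensity ξ hum
      _ = (PP.withDensity f).withDensity u := by
          rw [Measure.withDensity_rnDeriv_eq _ _ hac1]
      _ = PP.withDensity (f * u) := (withDensity_mul PP hfm hum).symm
      _ ≤ PP.withDensity 1 :=
          withDensity_mono (Filter.Eventually.of_forall fun x => hfu x)
      _ = PP := withDensity_one
  have hmarg2 : ν.map Prod.snd ≤ QQ := by
    calc ν.map Prod.snd ≤ (ξ.withDensity fun z => v z.2).map Prod.snd := by
          refine Measure.map_mono ?_ measurable_snd
          apply withDensity_mono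
          filter_upwards with z
          calc u z.1 * v z.2 ≤ 1 * v z.2 := mul_le_mul_left (hu1 _) _
            _ = v z.2 := one_mul _
      _ = (ξ.map Prod.snd).withDensity v := map_snd_withDensity ξ hvm
      _ = (QQ.withDensity g).withDensity v := by
          rw [Measure.withDensity_rnDeriv_eq _ _ hac2]
      _ = QQ.withDensity (g * v) := (withDensity_mul QQ hgm hvm).symm
      _ ≤ QQ.withDensity 1 :=
          withDensity_mono (Filter.Eventually.of_forall fun y => hgv y)
      _ = QQ := withDensity_one
  set ν₁ : Measure Ω := ν.map Prod.fst with hν₁def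
  set ν₂ : Measure Ω := ν.map Prod.snd with hν₂def
  haveI : IsFiniteMeasure ν₁ := isFiniteMeasure_of_le PP hmarg1
  haveI : IsFiniteMeasure ν₂ := isFiniteMeasure_of_le QQ hmarg2
  set P' : Measure Ω := PP - ν₁ with hP'def
  set Q' : Measure Ω := QQ - ν₂ with hQ'def
  haveI : IsFiniteMeasure P' := isFiniteMeasure_of_le PP Measure.sub_le
  haveI : IsFiniteMeasure Q' := isFiniteMeasure_of_le QQ Measure.sub_le
  set m : ℝ≥0∞ := 1 - ν Set.univ with hmdef
  have hmtop : m ≠ ⊤ := ne_top_of_le_ne_top ENNReal.one_ne_top tsub_le_self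
  have hν₁univ : ν₁ Set.univ = ν Set.univ := by
    rw [hν₁def, Measure.map_apply measurable_fst MeasurableSet.univ, Set.preimage_univ]
  have hν₂univ : ν₂ Set.univ = ν Set.univ := by
    rw [hν₂def, Measure.map_apply measurable_snd MeasurableSet.univ, Set.preimage_univ]
  have hP'univ : P' Set.univ = m := by
    rw [hP'def, Measure.sub_apply MeasurableSet.univ hmarg1, hν₁univ, measure_univ, hmdef]
  have hQ'univ : Q' Set.univ = m := by
    rw [hQ'def, Measure.sub_apply MeasurableSet.univ hmarg2, hν₂univ, measure_univ, hmdef]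
  have hcancel : ∀ μ0 : Measure Ω, μ0 Set.univ = m → (m⁻¹ * m) • μ0 = μ0 := by
    intro μ0 h0
    rcases eq_or_ne m 0 with hm | hm
    · have : μ0 = 0 := Measure.measure_univ_eq_zero.mp (by rw [h0, hm])
      simp [this]
    · rw [ENNReal.inv_mul_cancel hm hmtop, one_smul]
  set ζ : Measure (Ω × Ω) := ν + m⁻¹ • (P'.prod Q') with hζdef
  have hmapfst : ζ.map Prod.fst = PP := by
    rw [hζdef, Measure.map_add _ _ measurable_fst, Measure.map_smul,
      Measure.map_fst_prod, hQ'univ, smul_smul, hcancel P' hP'univ, hP'def, add_comm]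
    exact Measure.sub_add_cancel_of_le hmarg1
  have hmapsnd : ζ.map Prod.snd = QQ := by
    rw [hζdef, Measure.map_add _ _ measurable_snd, Measure.map_smul,
      Measure.map_snd_prod, hP'univ, smul_smul, hcancel Q' hQ'univ, hQ'def, add_comm]
    exact Measure.sub_add_cancel_of_le hmarg2
  have hζprob : IsProbabilityMeasure ζ := by
    constructor
    rw [← Set.preimage_univ (f := Prod.fst),
      ← Measure.map_apply measurable_fst MeasurableSet.univ, hmapfst, measure_univ]
  refine ⟨ζ, ⟨hζprob, hmapfst, hmapsnd⟩, ?_⟩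
  -- Markov bounds
  have hRp1 : ∫⁻ ω, f ω ^ p ∂PP ≤ ENNReal.ofReal R ^ p := by
    have h := ENNReal.rpow_le_rpow hL1 hp0.le
    rwa [← ENNReal.rpow_mul, one_div_mul_cancel hp0.ne', ENNReal.rpow_one] at h
  have hRp2 : ∫⁻ ω, g ω ^ p ∂QQ ≤ ENNReal.ofReal R ^ p := by
    have h := ENNReal.rpow_le_rpow hL2 hp0.le
    rwa [← ENNReal.rpow_mul, one_div_mul_cancel hp0.ne', ENNReal.rpow_one] at h
  have hdivle : ENNReal.ofReal R ^ p / M' ^ (p - 1) ≤ ENNReal.ofReal (α / 4) := by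
    rw [ENNReal.ofReal_rpow_of_pos hR, hM'def, ENNReal.ofReal_rpow_of_pos hM0,
      ← ENNReal.ofReal_div_of_pos (Real.rpow_pos_of_pos hM0 _)]
    exact ENNReal.ofReal_le_ofReal (by linarith [hMbig])
  have hbound1 : ξ {z : Ω × Ω | M' < f z.1} ≤ ENNReal.ofReal (α / 4) := by
    have hset : {z : Ω × Ω | M' < f z.1} = Prod.fst ⁻¹' {x | M' < f x} := rfl
    rw [hset, ← Measure.map_apply measurable_fst (measurableSet_lt measurable_const hfm)]
    exact (markov_aux PP (ξ.map Prod.fst) hac1 hp hRp1 hM'1 hM'top).trans hdivle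
  have hbound2 : ξ {z : Ω × Ω | M' < g z.2} ≤ ENNReal.ofReal (α / 4) := by
    have hset : {z : Ω × Ω | M' < g z.2} = Prod.snd ⁻¹' {y | M' < g y} := rfl
    rw [hset, ← Measure.map_apply measurable_snd (measurableSet_lt measurable_const hgm)]
    exact (markov_aux QQ (ξ.map Prod.snd) hac2 hp hRp2 hM'1 hM'top).trans hdivle
  intro A hA hαA
  set B : Set (Ω × Ω) := {z | f z.1 ≤ M' ∧ g z.2 ≤ M'} with hBdef
  have hcompl : ξ (A \ B) ≤ ENNReal.ofReal (α / 2) := by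
    have hsub : A \ B ⊆ {z : Ω × Ω | M' < f z.1} ∪ {z | M' < g z.2} := by
      rintro z ⟨-, hzB⟩
      simp only [hBdef, Set.mem_setOf_eq, not_and_or, not_le] at hzB
      exact hzB.imp (fun h => h) (fun h => h)
    calc ξ (A \ B) ≤ ξ ({z : Ω × Ω | M' < f z.1} ∪ {z | M' < g z.2}) := measure_mono hsub
      _ ≤ ξ {z : Ω × Ω | M' < f z.1} + ξ {z | M' < g z.2} := measure_union_le _ _
      _ ≤ ENNReal.ofReal (α / 4) + ENNReal.ofReal (α / 4) := add_le_add hbound1 hbound2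
      _ = ENNReal.ofReal (α / 2) := by
          rw [← ENNReal.ofReal_add (by linarith) (by linarith)]
          ring_nf
  have hAB : ENNReal.ofReal (α / 2) ≤ ξ (A ∩ B) := by
    have h1 : ξ A ≤ ξ (A ∩ B) + ξ (A \ B) := measure_le_inter_add_diff _ _ _
    have h2 : ENNReal.ofReal α ≤ ξ (A ∩ B) + ENNReal.ofReal (α / 2) :=
      hαA.trans (h1.trans (add_le_add le_rfl hcompl))
    have h3 := tsub_le_iff_right.mpr h2
    rwa [← ENNReal.ofReal_sub _ (by linarith : (0:ℝ) ≤ α / 2),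
      show α - α / 2 = α / 2 by ring] at h3
  have hwB : ∀ z ∈ A ∩ B, M'⁻¹ * M'⁻¹ ≤ w z := by
    rintro z ⟨-, hz1, hz2⟩
    exact mul_le_mul' (ENNReal.inv_le_inv' (max_le hz1 hM'1))
      (ENNReal.inv_le_inv' (max_le hz2 hM'1))
  have hνA : ENNReal.ofReal (α / (2 * M ^ 2)) ≤ ν A := by
    have h2 : ∫⁻ _ in A ∩ B, (M'⁻¹ * M'⁻¹) ∂ξ ≤ ∫⁻ z in A, w z ∂ξ := by
      calc ∫⁻ _ in A ∩ B, (M'⁻¹ * M'⁻¹) ∂ξ ≤ ∫⁻ z in A ∩ B, w z ∂ξ :=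
            setLIntegral_mono hwm hwB
        _ ≤ ∫⁻ z in A, w z ∂ξ := lintegral_mono_set Set.inter_subset_left
    rw [hνdef, withDensity_apply _ hA]
    refine le_trans ?_ h2
    rw [setLIntegral_const]
    calc ENNReal.ofReal (α / (2 * M ^ 2)) = M'⁻¹ * M'⁻¹ * ENNReal.ofReal (α / 2) := by
          rw [hM'def, ← ENNReal.ofReal_inv_of_pos hM0,
            ← ENNReal.ofReal_mul (by positivity), ← ENNReal.ofReal_mul (by positivity)]
          congr 1
          field_simp
          try ring
      _ ≤ M'⁻¹ * M'⁻¹ * ξ (A ∩ B) := mul_le_mul_right hAB _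
  refine hνA.trans ?_
  rw [hζdef, Measure.add_apply]
  exact le_self_add

/-- **Proposition A.1, part I.**  For fixed `p > 1` and `R > 0`: for each `α > 0`
there is `α' > 0` such that for all probability measures `𝓟, 𝓠` on the path space and
every `ξ ∈ Ĉ^R_p(𝓟,𝓠)` there is a true coupling `ζ ∈ C(𝓟,𝓠)` with `ζ(A) ≥ α'`
whenever `ξ(A) ≥ α`. -/
theorem coupling_from_Lp_gen_coupling
    {E : Type*} [MetricSpace E] [PolishSpace E] [MeasurableSpace E] [BorelSpace E]
    (p R : ℝ) (hp : 1 < p) (hR : 0 < R) :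
    ∀ α > (0 : ℝ), ∃ α' > (0 : ℝ),
      ∀ PP QQ : Measure (ℕ → E), IsProbabilityMeasure PP → IsProbabilityMeasure QQ →
        ∀ ξ ∈ GenCouplingLp p R PP QQ,
          ∃ ζ ∈ Coupling PP QQ,
            ∀ A : Set ((ℕ → E) × (ℕ → E)), MeasurableSet A →
              ENNReal.ofReal α ≤ ξ A → ENNReal.ofReal α' ≤ ζ A :=
  coupling_from_Lp_gen_coupling' p R hp hR

end
end

section
/- If ν₁ and ν₂ are mutually singular Borel probability measures on a Polish space (E,ρ), and d is a metric on E that is continuous with respect to ρ, then lim_{ε↓0} sup_{ζ ∈ C(ν₁,ν₂)} ζ( { (u,v) : d(u,v) ≤ ε } ) = 0. -/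
open MeasureTheory ProbabilityTheory Filter Topology

noncomputable section

/-!
By mutual singularity and tightness, for every `r > 0` there are disjoint compact
sets `K₁`, `K₂` with `ν₁ K₁ᶜ, ν₂ K₂ᶜ < r / 2`. The continuous function `d` is positive on the
compact set `K₁ ×ˢ K₂`, hence bounded below there by some `ε₀ > 0`. For `ε < ε₀` the set
`{d ≤ ε}` misses `K₁ ×ˢ K₂`, so every coupling gives it mass at most `ν₁ K₁ᶜ + ν₂ K₂ᶜ < r`.
-/

theorem IsAuxMetric.pos_of_ne {E : Type*} [TopologicalSpace E] {d : E → E → ℝ}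
    (hd : IsAuxMetric d) {x y : E} (hxy : x ≠ y) : 0 < d x y :=
  (hd.nonneg x y).lt_of_ne fun h => hxy ((hd.eq_zero_iff x y).1 h.symm)

theorem MeasurableSet.exists_isCompact_subset_measure_compl_lt {α : Type*} [TopologicalSpace α]
    [T2Space α] [MeasurableSpace α] [OpensMeasurableSpace α] {μ : Measure α} [IsFiniteMeasure μ]
    [μ.InnerRegularCompactLTTop] {A : Set α} (hA : MeasurableSet A) (hAc : μ Aᶜ = 0)
    {r : ENNReal} (hr : r ≠ 0) :
    ∃ K ⊆ A, IsCompact K ∧ μ Kᶜ < r := by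
  obtain ⟨K, hKA, hK, hlt⟩ := hA.exists_isCompact_sdiff_lt (measure_ne_top μ A) hr
  refine ⟨K, hKA, hK, ?_⟩
  rwa [Set.sdiff_eq_compl_inter, measure_inter_conull hAc] at hlt

theorem MeasureTheory.Measure.MutuallySingular.exists_disjoint_isCompact_measure_compl_lt
    {α : Type*} [TopologicalSpace α] [T2Space α] [MeasurableSpace α] [OpensMeasurableSpace α]
    {μ ν : Measure α} [IsFiniteMeasure μ] [IsFiniteMeasure ν] [μ.InnerRegularCompactLTTop]
    [ν.InnerRegularCompactLTTop] (h : μ.MutuallySingular ν) {r : ENNReal} (hr : r ≠ 0) :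
    ∃ K₁ K₂ : Set α, IsCompact K₁ ∧ IsCompact K₂ ∧ Disjoint K₁ K₂ ∧ μ K₁ᶜ < r ∧ ν K₂ᶜ < r := by
  obtain ⟨s, hs, hμs, hνs⟩ := h
  obtain ⟨K₁, hK₁s, hK₁, hμK₁⟩ :=
    hs.compl.exists_isCompact_subset_measure_compl_lt (by rwa [compl_compl]) hr
  obtain ⟨K₂, hK₂s, hK₂, hνK₂⟩ := hs.exists_isCompact_subset_measure_compl_lt hνs hr
  exact ⟨K₁, K₂, hK₁, hK₂, disjoint_compl_left.mono hK₁s hK₂s, hμK₁, hνK₂⟩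

theorem measure_le_of_mem_coupling_of_disjoint_prod {α : Type*} [MeasurableSpace α]
    {P Q : Measure α} {ζ : Measure (α × α)} (hζ : ζ ∈ Coupling P Q) {A B : Set α}
    (hA : MeasurableSet A) (hB : MeasurableSet B) {S : Set (α × α)} (hS : Disjoint S (A ×ˢ B)) :
    ζ S ≤ P Aᶜ + Q Bᶜ := by
  obtain ⟨-, hζP, hζQ⟩ := hζ
  rw [← hζP, ← hζQ, Measure.map_apply measurable_fst hA.compl,
    Measure.map_apply measurable_snd hB.compl]
  calc ζ S ≤ ζ (Prod.fst ⁻¹' Aᶜ ∪ Prod.snd ⁻¹' Bᶜ) := by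
        refine measure_mono fun p hp => ?_
        by_contra hp'
        simp only [Set.mem_union, Set.mem_preimage, Set.mem_compl_iff, not_or, not_not] at hp'
        exact Set.disjoint_left.1 hS hp hp'
    _ ≤ ζ (Prod.fst ⁻¹' Aᶜ) + ζ (Prod.snd ⁻¹' Bᶜ) := measure_union_le _ _

theorem IsCompact.exists_pos_forall_le_of_disjoint {α : Type*} [TopologicalSpace α]
    {K₁ K₂ : Set α} (hK₁ : IsCompact K₁) (hK₂ : IsCompact K₂) (hK : Disjoint K₁ K₂)
    {d : α → α → ℝ} (hcont : Continuous fun p : α × α => d p.1 p.2)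
    (hpos : ∀ x y, x ≠ y → 0 < d x y) :
    ∃ ε₀ > 0, ∀ x ∈ K₁, ∀ y ∈ K₂, ε₀ ≤ d x y := by
  obtain ⟨ε₀, hε₀, hle⟩ := (hK₁.prod hK₂).exists_forall_le' hcont.continuousOn
    fun p hp => hpos p.1 p.2 fun hp₁₂ => Set.disjoint_left.1 hK hp.1 (hp₁₂ ▸ hp.2)
  exact ⟨ε₀, hε₀, fun x hx y hy => hle (x, y) ⟨hx, hy⟩⟩

theorem MeasureTheory.Measure.MutuallySingular.eventually_forall_coupling_measure_lt
    {α : Type*} [TopologicalSpace α] [T2Space α] [MeasurableSpace α] [OpensMeasurableSpace α]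
    {ν₁ ν₂ : Measure α} [IsFiniteMeasure ν₁] [IsFiniteMeasure ν₂] [ν₁.InnerRegularCompactLTTop]
    [ν₂.InnerRegularCompactLTTop] (h : ν₁.MutuallySingular ν₂) {d : α → α → ℝ}
    (hcont : Continuous fun p : α × α => d p.1 p.2) (hpos : ∀ x y, x ≠ y → 0 < d x y)
    {r : ENNReal} (hr : r ≠ 0) :
    ∀ᶠ ε in 𝓝 0, ∀ ζ ∈ Coupling ν₁ ν₂, ζ {p | d p.1 p.2 ≤ ε} < r := by
  obtain ⟨K₁, K₂, hK₁, hK₂, hK, hν₁, hν₂⟩ :=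
    h.exists_disjoint_isCompact_measure_compl_lt (ENNReal.half_pos hr).ne'
  obtain ⟨ε₀, hε₀, hsep⟩ := hK₁.exists_pos_forall_le_of_disjoint hK₂ hK hcont hpos
  filter_upwards [eventually_lt_nhds hε₀] with ε hε ζ hζ
  have hdisj : Disjoint {p : α × α | d p.1 p.2 ≤ ε} (K₁ ×ˢ K₂) :=
    Set.disjoint_left.2 fun p hp hpK => (hε.trans_le (hsep _ hpK.1 _ hpK.2)).not_ge hp
  calc ζ {p | d p.1 p.2 ≤ ε} ≤ ν₁ K₁ᶜ + ν₂ K₂ᶜ :=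
        measure_le_of_mem_coupling_of_disjoint_prod hζ hK₁.measurableSet hK₂.measurableSet hdisj
    _ < r / 2 + r / 2 := ENNReal.add_lt_add hν₁ hν₂
    _ = r := ENNReal.add_halves r

/-- **Proposition A.2.**  If `ν₁ ⊥ ν₂` are mutually singular probability measures on a
Polish space and `d` is a metric continuous w.r.t. the Polish topology, then
`sup_{ζ ∈ C(ν₁,ν₂)} ζ(d(X,Y) ≤ ε) → 0` as `ε ↓ 0`. -/
theorem singular_measures_coupling_limit
    {E : Type*} [MetricSpace E] [PolishSpace E] [MeasurableSpace E] [BorelSpace E]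
    (d : E → E → ℝ) (hd : IsAuxMetric d)
    (ν₁ ν₂ : Measure E) [IsProbabilityMeasure ν₁] [IsProbabilityMeasure ν₂]
    (hsing : ν₁.MutuallySingular ν₂) :
    Tendsto (fun ε : ℝ =>
        ⨆ ζ ∈ Coupling ν₁ ν₂, (ζ {p : E × E | d p.1 p.2 ≤ ε}).toReal)
      (𝓝[>] (0 : ℝ)) (𝓝 0) := by
  refine tendsto_order.2 ⟨fun a ha => Eventually.of_forall fun ε => ha.trans_le
    (Real.iSup_nonneg fun ζ => Real.iSup_nonneg fun _ => ENNReal.toReal_nonneg), fun a ha => ?_⟩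
  have ha2 : 0 < a / 2 := half_pos ha
  filter_upwards [nhdsWithin_le_nhds (hsing.eventually_forall_coupling_measure_lt hd.cont
    (fun _ _ => hd.pos_of_ne) (ENNReal.ofReal_pos.2 ha2).ne')] with ε hε
  calc ⨆ ζ ∈ Coupling ν₁ ν₂, (ζ {p : E × E | d p.1 p.2 ≤ ε}).toReal ≤ a / 2 :=
        Real.iSup_le (fun ζ => Real.iSup_le (fun hζ =>
          ENNReal.toReal_le_of_le_ofReal ha2.le (hε ζ hζ).le) ha2.le) ha2.le
    _ < a := half_lt_self ha
end
end
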